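/- Let 1 < p < ∞, 1/p + 1/q = 1, s > 0, and suppose c₇^{-1} r^d ≤ μ(B(x,r)) ≤ c₇ r^d for all x ∈ M, r > 0. Then for every nonnegative Radon measure ν, the fractional maximal function M_s ν(x) := sup_{r>0} r^{−s} ν(B(x,r)) satisfies ‖M_s ν‖_{L^q(M)}^q ≤ C ∫_M Ẇ_{s,p}^ν dν, where Ẇ_{s,p}^ν(x) := Σ_{j∈ℤ} 2^{jsq} ∫_{B(x,2^{−j})} ν(B(y,2^{−j}))^{q−1} dμ(y) is the Wolff potential. -/

import Mathlib

open Set MeasureTheory ENNReal Metric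

/-!
With the dyadic radius `r ≤ 2^{-j} ≤ 2r`, `r^{-s} ν(B(x,r)) ≤ 2^s · 2^{js} ν(B(x,2^{-j}))`, so
`(M_s ν(x))^q ≤ 2^{sq} Σ_j 2^{jsq} ν(B(x,2^{-j}))^q` (`ℓ^∞ ≤ ℓ^q`). Integrating in `μ`, writing
`ν(B(x,R))^q = ∫_{B(x,R)} ν(B(x,R))^{q-1} dν` and using Tonelli together with the symmetry
`y ∈ B(x,R) ↔ x ∈ B(y,R)` turns each term into the corresponding term of `∫ Ẇ_{s,p}^ν dν`.
Tonelli needs `ν` to be σ-finite, which holds when every ball has finite `ν`-measure; otherwise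
the right-hand side is infinite. Ahlfors regularity makes `μ` σ-finite and `M` second countable,
which is what makes the balls a measurable family in the product.
-/

theorem exists_dyadic_radius {r : ℝ} (hr : 0 < r) :
    ∃ j : ℤ, r ≤ (2:ℝ) ^ (-(j:ℝ)) ∧ (2:ℝ) ^ (-(j:ℝ)) ≤ 2 * r := by
  obtain ⟨n, hn, hn'⟩ := exists_mem_Ioc_zpow hr one_lt_two
  refine ⟨-(n + 1), ?_, ?_⟩ <;>
    rw [show -((-(n + 1) : ℤ) : ℝ) = ((n + 1 : ℤ) : ℝ) by push_cast; ring, Real.rpow_intCast,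
      zpow_add_one₀ two_ne_zero]
  · rwa [← zpow_add_one₀ two_ne_zero]
  · linarith

theorem setLIntegral_eq_top_of_forall_mem_eq_top {α : Type*} [MeasurableSpace α]
    {μ : Measure α} {s : Set α} (hs : MeasurableSet s) (hμs : μ s ≠ 0) {f : α → ℝ≥0∞}
    (hf : ∀ x ∈ s, f x = ∞) : ∫⁻ x in s, f x ∂μ = ∞ :=
  top_unique <| calc
    ∞ = ∫⁻ _ in s, ∞ ∂μ := by rw [setLIntegral_const, top_mul hμs]
    _ ≤ ∫⁻ x in s, f x ∂μ := setLIntegral_mono' hs fun x hx => (hf x hx).ge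

theorem lintegral_tsum_const_mul {α ι : Type*} [MeasurableSpace α] [Countable ι]
    (μ : Measure α) (c : ι → ℝ≥0∞) {f : ι → α → ℝ≥0∞} (hf : ∀ i, Measurable (f i)) :
    ∫⁻ x, ∑' i, c i * f i x ∂μ = ∑' i, c i * ∫⁻ x, f i x ∂μ := by
  rw [lintegral_tsum fun i => ((hf i).const_mul (c i)).aemeasurable]
  exact tsum_congr fun i => lintegral_const_mul _ (hf i)

section

variable {M : Type*} [MetricSpace M] [MeasurableSpace M]

theorem sigmaFinite_of_measure_ball_lt_top (μ : Measure M)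
    (h : ∀ (x : M) (r : ℝ), 0 < r → μ (ball x r) < ∞) : SigmaFinite μ := by
  rcases isEmpty_or_nonempty M with hM | ⟨⟨x₀⟩⟩
  · infer_instance
  · exact Measure.FiniteSpanningSetsIn.sigmaFinite
      (⟨fun n : ℕ => ball x₀ (n + 1), fun _ => mem_univ _,
        fun _ => h x₀ _ (Nat.cast_add_one_pos _), iUnion_ball_nat_succ x₀⟩ :
        μ.FiniteSpanningSetsIn univ)

theorem iSup_measure_ball_div_rpow_rpow_le (ν : Measure M) {q s : ℝ} (hq : 0 < q) (hs : 0 ≤ s)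
    (x : M) :
    (⨆ (r : ℝ) (_ : 0 < r), ν (ball x r) / ENNReal.ofReal (r ^ s)) ^ q ≤
      (2:ℝ≥0∞) ^ (s * q) *
        ∑' j : ℤ, (2:ℝ≥0∞) ^ ((j:ℝ) * s * q) * ν (ball x ((2:ℝ) ^ (-(j:ℝ)))) ^ q := by
  refine (le_rpow_inv_iff hq).1 (iSup₂_le fun r hr => (le_rpow_inv_iff hq).2 ?_)
  obtain ⟨j, hrj, hjr⟩ := exists_dyadic_radius hr
  have hinv : (ENNReal.ofReal (r ^ s))⁻¹ ≤ (2:ℝ≥0∞) ^ (((j:ℝ) + 1) * s) := by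
    rw [ENNReal.inv_le_iff_inv_le, ← ENNReal.rpow_neg, ← neg_mul, ← ofReal_ofNat,
      ENNReal.ofReal_rpow_of_pos two_pos, Real.rpow_mul zero_le_two]
    refine ENNReal.ofReal_le_ofReal (Real.rpow_le_rpow (by positivity) ?_ hs)
    rw [neg_add, Real.rpow_add two_pos, Real.rpow_neg_one]
    linarith
  calc (ν (ball x r) / ENNReal.ofReal (r ^ s)) ^ q
      ≤ (ν (ball x ((2:ℝ) ^ (-(j:ℝ)))) * (2:ℝ≥0∞) ^ (((j:ℝ) + 1) * s)) ^ q :=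
        rpow_le_rpow (mul_le_mul' (measure_mono (ball_subset_ball hrj)) hinv) hq.le
    _ = (2:ℝ≥0∞) ^ (s * q) *
          ((2:ℝ≥0∞) ^ ((j:ℝ) * s * q) * ν (ball x ((2:ℝ) ^ (-(j:ℝ)))) ^ q) := by
        rw [mul_rpow_of_nonneg _ _ hq.le, ← rpow_mul,
          show ((j:ℝ) + 1) * s * q = s * q + (j:ℝ) * s * q by ring,
          rpow_add _ _ two_ne_zero ofNat_ne_top]
        ring
    _ ≤ _ := mul_le_mul_right (ENNReal.le_tsum (f := fun j : ℤ =>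
        (2:ℝ≥0∞) ^ ((j:ℝ) * s * q) * ν (ball x ((2:ℝ) ^ (-(j:ℝ)))) ^ q) j) _

/-- The Wolff potential `Ẇ^ν_{s,p}` of the paper, written with the conjugate exponent `q`. -/
noncomputable def wolffPotential (μ ν : Measure M) (s q : ℝ) (x : M) : ℝ≥0∞ :=
  ∑' j : ℤ, (2:ℝ≥0∞) ^ ((j : ℝ) * s * q) *
    ∫⁻ y in ball x ((2:ℝ) ^ (-(j:ℝ))), ν (ball y ((2:ℝ) ^ (-(j:ℝ)))) ^ (q - 1) ∂μ

variable [OpensMeasurableSpace M]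

/-- A maximal `ε`-separated set is `ε`-dense, and it is countable because the disjoint balls
of radius `ε / 2` around its points all have positive measure. -/
theorem secondCountableTopology_of_measure_ball_pos (μ : Measure M)
    [SFinite μ] (h : ∀ (x : M) (r : ℝ), 0 < r → 0 < μ (ball x r)) :
    SecondCountableTopology M := by
  refine Metric.secondCountable_of_almost_dense_set fun ε hε => ?_
  obtain ⟨N, hN⟩ := zorn_subset {N : Set M | IsSeparated (ε.toNNReal : ℝ≥0∞) N}
    fun c hcS hc => ⟨⋃₀ c, hc.pairwise_sUnion.2 hcS, fun _ => subset_sUnion_of_mem⟩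
  have hcover : IsCover ε.toNNReal univ N :=
    IsCover.of_maximal_isSeparated (by simpa only [subset_univ, true_and, mem_ofPred_eq] using hN)
  have hdisj : Pairwise (Function.onFun Disjoint fun y : N => ball (y : M) (ε / 2)) := by
    intro y z hyz
    refine ball_disjoint_ball ?_
    have hsep : ENNReal.ofReal ε < ENNReal.ofReal (dist (y : M) z) := by
      rw [← edist_dist]
      exact hN.prop y.2 z.2 (Subtype.coe_ne_coe.2 hyz)
    linarith [(ENNReal.ofReal_lt_ofReal_iff'.1 hsep).1]
  have hcount := Measure.countable_meas_pos_of_disjoint_iUnion (μ := μ)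
    (fun _ => measurableSet_ball) hdisj
  simp only [h _ _ (half_pos hε), ofPred_true, countable_univ_iff] at hcount
  refine ⟨N, N.countable_coe_iff.1 hcount, fun x => ?_⟩
  obtain ⟨y, hy, hxy⟩ := hcover (mem_univ x)
  exact ⟨y, hy, (edist_le_ofReal hε.le).1 hxy⟩

theorem setLIntegral_measure_ball_rpow_eq_top {μ ν : Measure M} {y₀ : M} {r₀ : ℝ}
    (hμ : μ (ball y₀ r₀) ≠ 0) (hν : ν (ball y₀ r₀) = ∞) {a : ℝ} (ha : 0 < a) {R : ℝ}
    (hR : 2 * r₀ ≤ R) {x : M} (hx : x ∈ ball y₀ r₀) :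
    ∫⁻ y in ball x R, ν (ball y R) ^ a ∂μ = ∞ := by
  have hsub : ∀ z ∈ ball y₀ r₀, ball y₀ r₀ ⊆ ball z R := fun z hz =>
    ball_subset_ball' (by rw [mem_ball'] at hz; linarith)
  refine top_unique ((setLIntegral_eq_top_of_forall_mem_eq_top measurableSet_ball hμ
    fun y hy => ?_).ge.trans (lintegral_mono_set (hsub x hx)))
  rw [measure_mono_top (hsub y hy) hν, top_rpow_of_pos ha]

theorem lintegral_wolffPotential_eq_top (μ ν : Measure M) {q s : ℝ} (hq : 1 < q)
    (hμ : ∀ (x : M) (r : ℝ), 0 < r → 0 < μ (ball x r)) {y₀ : M} {r₀ : ℝ} (hr₀ : 0 < r₀)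
    (hν : ν (ball y₀ r₀) = ∞) : ∫⁻ x, wolffPotential μ ν s q x ∂ν = ∞ := by
  obtain ⟨j, hj, -⟩ := exists_dyadic_radius (by positivity : 0 < 2 * r₀)
  have hW : ∀ x ∈ ball y₀ r₀, wolffPotential μ ν s q x = ∞ := fun x hx => by
    refine top_unique (le_trans ?_ (ENNReal.le_tsum j))
    rw [setLIntegral_measure_ball_rpow_eq_top (hμ y₀ r₀ hr₀).ne' hν (by linarith) hj hx,
      mul_top (by simp)]
  exact top_unique ((setLIntegral_eq_top_of_forall_mem_eq_top measurableSet_ball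
    (by simp [hν]) hW).ge.trans (setLIntegral_le_lintegral _ _))

variable [SecondCountableTopology M]

theorem measurable_measure_ball (ν : Measure M) [SFinite ν] (R : ℝ) :
    Measurable fun x => ν (ball x R) :=
  measurable_measure_prodMk_left
    (isOpen_lt (continuous_snd.dist continuous_fst) continuous_const).measurableSet

theorem measurable_indicator_ball_uncurry {f : M → ℝ≥0∞} (hf : Measurable f) (R : ℝ) :
    Measurable (Function.uncurry fun x y : M => (ball y R).indicator f x) :=
  (hf.comp measurable_fst).indicator
    (isOpen_lt continuous_dist continuous_const).measurableSet

theorem measurable_setLIntegral_ball (μ : Measure M) [SFinite μ] {f : M → ℝ≥0∞}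
    (hf : Measurable f) (R : ℝ) : Measurable fun x => ∫⁻ y in ball x R, f y ∂μ := by
  simp_rw [← lintegral_indicator measurableSet_ball]
  exact (measurable_indicator_ball_uncurry hf R).comp measurable_swap |>.lintegral_prod_right'

/-- Tonelli: `ν(B(x,R))^q = ∫_{B(x,R)} ν(B(x,R))^{q-1} dν`, and `y ∈ B(x,R) ↔ x ∈ B(y,R)`. -/
theorem lintegral_measure_ball_rpow_eq (μ ν : Measure M) [SFinite μ] [SFinite ν] {q : ℝ}
    (hq : 1 ≤ q) (R : ℝ) :
    ∫⁻ x, ν (ball x R) ^ q ∂μ = ∫⁻ x, ∫⁻ y in ball x R, ν (ball y R) ^ (q - 1) ∂μ ∂ν := by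
  have hg : Measurable fun x => ν (ball x R) ^ (q - 1) :=
    (measurable_measure_ball ν R).pow_const _
  calc ∫⁻ x, ν (ball x R) ^ q ∂μ
      = ∫⁻ x, ∫⁻ y, (ball y R).indicator (fun x => ν (ball x R) ^ (q - 1)) x ∂ν ∂μ := by
        refine lintegral_congr fun x => ?_
        have hmem : ∀ y, (ball y R).indicator (fun x => ν (ball x R) ^ (q - 1)) x =
            (ball x R).indicator (fun _ => ν (ball x R) ^ (q - 1)) y := fun y => by
          simp only [indicator, mem_ball, dist_comm]
        rw [lintegral_congr hmem, lintegral_indicator measurableSet_ball, setLIntegral_const]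
        conv_lhs => rw [← sub_add_cancel q 1]
        rw [rpow_add_of_nonneg _ _ (sub_nonneg.2 hq) zero_le_one, rpow_one]
    _ = ∫⁻ x, ∫⁻ y in ball x R, ν (ball y R) ^ (q - 1) ∂μ ∂ν := by
        rw [lintegral_lintegral_swap (measurable_indicator_ball_uncurry hg R).aemeasurable]
        simp_rw [lintegral_indicator measurableSet_ball]

theorem lintegral_iSup_rpow_le_lintegral_wolffPotential (μ ν : Measure M) [SFinite μ]
    [SFinite ν] {q s : ℝ} (hq : 1 < q) (hs : 0 ≤ s) :
    ∫⁻ x, (⨆ (r : ℝ) (_ : 0 < r), ν (ball x r) / ENNReal.ofReal (r ^ s)) ^ q ∂μ ≤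
      (2:ℝ≥0∞) ^ (s * q) * ∫⁻ x, wolffPotential μ ν s q x ∂ν := by
  have hball : ∀ j : ℤ, Measurable fun x => ν (ball x ((2:ℝ) ^ (-(j:ℝ)))) ^ q :=
    fun j => (measurable_measure_ball ν _).pow_const q
  have hwolff : ∀ j : ℤ, Measurable fun x => ∫⁻ y in ball x ((2:ℝ) ^ (-(j:ℝ))),
      ν (ball y ((2:ℝ) ^ (-(j:ℝ)))) ^ (q - 1) ∂μ :=
    fun j => measurable_setLIntegral_ball μ ((measurable_measure_ball ν _).pow_const _) _
  calc _ ≤ ∫⁻ x, (2:ℝ≥0∞) ^ (s * q) *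
          ∑' j : ℤ, (2:ℝ≥0∞) ^ ((j:ℝ) * s * q) * ν (ball x ((2:ℝ) ^ (-(j:ℝ)))) ^ q ∂μ :=
        lintegral_mono fun x => iSup_measure_ball_div_rpow_rpow_le ν (by linarith) hs x
    _ = (2:ℝ≥0∞) ^ (s * q) * ∑' j : ℤ, (2:ℝ≥0∞) ^ ((j:ℝ) * s * q) *
          ∫⁻ x, ν (ball x ((2:ℝ) ^ (-(j:ℝ)))) ^ q ∂μ := by
        rw [lintegral_const_mul' _ _ (rpow_ne_top_of_nonneg (by positivity) ofNat_ne_top),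
          lintegral_tsum_const_mul μ _ hball]
    _ = (2:ℝ≥0∞) ^ (s * q) * ∫⁻ x, wolffPotential μ ν s q x ∂ν := by
        simp_rw [wolffPotential, lintegral_tsum_const_mul ν _ hwolff,
          lintegral_measure_ball_rpow_eq μ ν hq.le]

end

/-- Wolff inequality: if `μ` is Ahlfors `d`-regular
(`c₇⁻¹ r^d ≤ μ(B(x,r)) ≤ c₇ r^d`), `1 < p < ∞` with conjugate `q`, `s > 0`, then there
is `C > 0` such that for every nonnegative Radon measure `ν` the fractional maximal
function `M_s ν(x) = sup_{r>0} r^{-s} ν(B(x,r))` satisfies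
`‖M_s ν‖_{L^q(μ)}^q ≤ C ∫ Ẇ_{s,p}^ν dν`, where
`Ẇ_{s,p}^ν(x) = Σ_{j∈ℤ} 2^{jsq} ∫_{B(x,2^{-j})} ν(B(y,2^{-j}))^{q-1} dμ(y)`. -/
theorem stmt14 {M : Type*} [MetricSpace M] [MeasurableSpace M] [BorelSpace M]
    (μ : Measure M) (p q s d c₇ : ℝ)
    (hp : 1 < p) (hconj : 1 / p + 1 / q = 1) (hs : 0 < s) (hc₇ : 0 < c₇)
    (hvol : ∀ (x : M) (r : ℝ), 0 < r →
      ENNReal.ofReal (c₇⁻¹ * r ^ d) ≤ μ (Metric.ball x r) ∧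
      μ (Metric.ball x r) ≤ ENNReal.ofReal (c₇ * r ^ d)) :
    ∃ C : ℝ, 0 < C ∧ ∀ ν : Measure M,
      ∫⁻ x, (⨆ (r : ℝ) (_ : 0 < r), ν (Metric.ball x r) / ENNReal.ofReal (r ^ s)) ^ q ∂μ ≤
        ENNReal.ofReal C *
          ∫⁻ x, ∑' j : ℤ, (2:ℝ≥0∞) ^ ((j : ℝ) * s * q) *
            ∫⁻ y in Metric.ball x ((2:ℝ) ^ (-(j:ℝ))),
              ν (Metric.ball y ((2:ℝ) ^ (-(j:ℝ)))) ^ (q - 1) ∂μ ∂ν := by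
  have hq : 1 < q :=
    (Real.holderConjugate_iff.2 ⟨hp, by simpa only [one_div] using hconj⟩).symm.lt
  have hμ_pos : ∀ (x : M) (r : ℝ), 0 < r → 0 < μ (ball x r) := fun x r hr =>
    (ofReal_pos.2 (by positivity)).trans_le (hvol x r hr).1
  have := sigmaFinite_of_measure_ball_lt_top μ fun x r hr =>
    (hvol x r hr).2.trans_lt ofReal_lt_top
  have := secondCountableTopology_of_measure_ball_pos μ hμ_pos
  refine ⟨2 ^ (s * q), by positivity, fun ν => ?_⟩
  change _ ≤ _ * ∫⁻ x, wolffPotential μ ν s q x ∂ν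
  rw [← ofReal_rpow_of_pos two_pos, ofReal_ofNat]
  by_cases hν : ∀ (x : M) (r : ℝ), 0 < r → ν (ball x r) < ∞
  · have := sigmaFinite_of_measure_ball_lt_top ν hν
    exact lintegral_iSup_rpow_le_lintegral_wolffPotential μ ν hq hs.le
  · push Not at hν
    obtain ⟨y₀, r₀, hr₀, hν_top⟩ := hν
    rw [lintegral_wolffPotential_eq_top μ ν hq hμ_pos hr₀ (top_le_iff.1 hν_top), mul_top (by simp)]
    exact le_top
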